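/- arXiv:math/0006185 — 3 statements merged into one kernel-verified Lean document; each statement's English description precedes it below -/
import Mathlib

section
/- Let E be a metric space and let F be a real normed vector space. Let A and B be two closed ℝ⁺-conic subsets of E × F. Then A +̂ B is a closed subset of E × F and is ℝ⁺-conic. -/
open Filter Topology

/-- The operation `A +̂ B` of Kashiwara–Schapira (Definition 4.4):
`(p, η) ∈ A +̂ B` iff there are sequences `(xₙ, σₙ) ∈ A`, `(yₙ, τₙ) ∈ B` with
`xₙ → p`, `yₙ → p`, `σₙ + τₙ → η`, and `dist(xₙ, yₙ) ⬝ ‖σₙ‖ → 0`. -/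
def hatSum {E F : Type*} [MetricSpace E] [NormedAddCommGroup F]
    (A B : Set (E × F)) : Set (E × F) :=
  {q : E × F | ∃ (x y : ℕ → E) (σ τ : ℕ → F),
    (∀ n, (x n, σ n) ∈ A) ∧ (∀ n, (y n, τ n) ∈ B) ∧
    Tendsto x atTop (𝓝 q.1) ∧ Tendsto y atTop (𝓝 q.1) ∧
    Tendsto (fun n => σ n + τ n) atTop (𝓝 q.2) ∧
    Tendsto (fun n => dist (x n) (y n) * ‖σ n‖) atTop (𝓝 0)}

/-!
`A +̂ B` is the set of `q` such that `(q.1, q.1, q.2, 0)` lies in the closure of the image of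
`A ×ˢ B` under `((x, σ), (y, τ)) ↦ (x, y, σ + τ, dist x y * ‖σ‖)` (closures in metric spaces are
sequential), hence a closed set. Scaling `σₙ` and `τₙ` by `r > 0` scales `σₙ + τₙ` and
`dist xₙ yₙ * ‖σₙ‖` by `r`, which gives conicity.
-/

section

open Set

variable {E F : Type*} [MetricSpace E] [NormedAddCommGroup F]

def hatSumProfile (u : (E × F) × (E × F)) : E × E × F × ℝ :=
  (u.1.1, u.2.1, u.1.2 + u.2.2, dist u.1.1 u.2.1 * ‖u.1.2‖)

theorem hatSum_eq_preimage_closure (A B : Set (E × F)) :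
    hatSum A B = (fun q : E × F => (q.1, q.1, q.2, (0 : ℝ))) ⁻¹'
      closure (hatSumProfile '' A ×ˢ B) := by
  ext q
  simp only [mem_preimage, mem_closure_iff_seq_limit]
  constructor
  · rintro ⟨x, y, σ, τ, hxA, hyB, hx, hy, hστ, hd⟩
    refine ⟨fun n => hatSumProfile ((x n, σ n), (y n, τ n)),
      fun n => mem_image_of_mem _ ⟨hxA n, hyB n⟩, ?_⟩
    simp only [hatSumProfile, Prod.tendsto_iff]
    exact ⟨hx, hy, hστ, hd⟩
  · rintro ⟨z, hz, hzq⟩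
    choose w hwAB hwz using hz
    obtain rfl : hatSumProfile ∘ w = z := funext hwz
    simp only [hatSumProfile, Function.comp_def, Prod.tendsto_iff] at hzq
    exact ⟨_, _, _, _, fun n => (hwAB n).1, fun n => (hwAB n).2, hzq.1, hzq.2.1, hzq.2.2.1,
      hzq.2.2.2⟩

theorem isClosed_hatSum (A B : Set (E × F)) : IsClosed (hatSum A B) := by
  rw [hatSum_eq_preimage_closure]
  exact isClosed_closure.preimage (by fun_prop)

variable [NormedSpace ℝ F]

def IsPosConic (S : Set (E × F)) : Prop :=
  ∀ p : E, ∀ η : F, (p, η) ∈ S → ∀ r : ℝ, 0 < r → (p, r • η) ∈ S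

theorem IsPosConic.hatSum {A B : Set (E × F)} (hA : IsPosConic A) (hB : IsPosConic B) :
    IsPosConic (hatSum A B) := by
  rintro p η ⟨x, y, σ, τ, hxA, hyB, hx, hy, hστ, hd⟩ r hr
  refine ⟨x, y, fun n => r • σ n, fun n => r • τ n, fun n => hA _ _ (hxA n) r hr,
    fun n => hB _ _ (hyB n) r hr, hx, hy, ?_, ?_⟩
  · simpa only [smul_add] using hστ.const_smul r
  · have hscaled : ∀ n, r * (dist (x n) (y n) * ‖σ n‖) = dist (x n) (y n) * ‖r • σ n‖ :=
      fun n => by rw [norm_smul, Real.norm_of_nonneg hr.le]; ring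
    simpa only [hscaled, mul_zero] using hd.const_mul r

end

theorem hatSum_isClosed_and_conic_general
    {E F : Type*} [MetricSpace E] [NormedAddCommGroup F] [NormedSpace ℝ F]
    (A B : Set (E × F))
    (hAconic : ∀ p : E, ∀ η : F, (p, η) ∈ A → ∀ r : ℝ, 0 < r → (p, r • η) ∈ A)
    (hBconic : ∀ p : E, ∀ η : F, (p, η) ∈ B → ∀ r : ℝ, 0 < r → (p, r • η) ∈ B) :
    IsClosed (hatSum A B) ∧
      (∀ p : E, ∀ η : F, (p, η) ∈ hatSum A B → ∀ r : ℝ, 0 < r →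
        (p, r • η) ∈ hatSum A B) :=
  ⟨isClosed_hatSum A B, IsPosConic.hatSum hAconic hBconic⟩

/-- Proposition 4.6.(i): if `A` and `B` are closed `ℝ⁺`-conic subsets of
`E × F`, then `A +̂ B` is closed and `ℝ⁺`-conic. -/
theorem hatSum_isClosed_and_conic
    {E F : Type*} [MetricSpace E] [NormedAddCommGroup F] [NormedSpace ℝ F]
    (A B : Set (E × F)) (hA : IsClosed A) (hB : IsClosed B)
    (hAconic : ∀ p : E, ∀ η : F, (p, η) ∈ A → ∀ r : ℝ, 0 < r → (p, r • η) ∈ A)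
    (hBconic : ∀ p : E, ∀ η : F, (p, η) ∈ B → ∀ r : ℝ, 0 < r → (p, r • η) ∈ B) :
    IsClosed (hatSum A B) ∧
      (∀ p : E, ∀ η : F, (p, η) ∈ hatSum A B → ∀ r : ℝ, 0 < r →
        (p, r • η) ∈ hatSum A B) :=
  hatSum_isClosed_and_conic_general A B hAconic hBconic
end

section
/- Let E and F be finite-dimensional real normed vector spaces. Let A and B be two closed ℝ⁺-conic subsets of E × F, and suppose that A ∩ Bᵃ ⊆ E × {0}, where Bᵃ := {(p, −η) : (p, η) ∈ B} is the image of B under the antipodal map. Then the fibrewise sum A + B := {(p, σ + τ) : (p, σ) ∈ A and (p, τ) ∈ B} is a closed subset of E × F and is ℝ⁺-conic. -/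
open Filter Metric Set Topology

/-- The fibrewise sum `A + B = {(p, σ + τ) : (p, σ) ∈ A, (p, τ) ∈ B}`. -/
def fibreSum {E F : Type*} [AddCommGroup F] (A B : Set (E × F)) : Set (E × F) :=
  {q : E × F | ∃ σ τ : F, (q.1, σ) ∈ A ∧ (q.1, τ) ∈ B ∧ q.2 = σ + τ}

/-- Proposition 4.6.(ii): if `A` and `B` are closed `ℝ⁺`-conic subsets of
`E × F` with `A ∩ Bᵃ` contained in the zero-section, then the fibrewise sum
`A + B` is closed and `ℝ⁺`-conic. -/
theorem fibreSum_isClosed_and_conic_of_antipodal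
    {E F : Type*}
    [NormedAddCommGroup E] [NormedSpace ℝ E] [FiniteDimensional ℝ E]
    [NormedAddCommGroup F] [NormedSpace ℝ F] [FiniteDimensional ℝ F]
    (A B : Set (E × F)) (hA : IsClosed A) (hB : IsClosed B)
    (hAconic : ∀ p : E, ∀ η : F, (p, η) ∈ A → ∀ r : ℝ, 0 < r → (p, r • η) ∈ A)
    (hBconic : ∀ p : E, ∀ η : F, (p, η) ∈ B → ∀ r : ℝ, 0 < r → (p, r • η) ∈ B)
    (hanti : A ∩ {q : E × F | (q.1, -q.2) ∈ B} ⊆ {q : E × F | q.2 = 0}) :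
    IsClosed (fibreSum A B) ∧
      (∀ p : E, ∀ η : F, (p, η) ∈ fibreSum A B → ∀ r : ℝ, 0 < r →
        (p, r • η) ∈ fibreSum A B) := by
  constructor
  · rw [← isSeqClosed_iff_isClosed]
    intro x q hx hq
    choose σ τ hσ hτ hsum using hx
    have hq1 : Tendsto (fun n => (x n).1) atTop (𝓝 q.1) :=
      (continuous_fst.tendsto q).comp hq
    have hq2 : Tendsto (fun n => σ n + τ n) atTop (𝓝 q.2) := by
      have h2 : Tendsto (fun n => (x n).2) atTop (𝓝 q.2) :=
        (continuous_snd.tendsto q).comp hq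
      simpa [funext hsum] using h2
    -- Step 1: the sequence σ is bounded.
    have hbdd : ∃ C : ℝ, ∀ n, ‖σ n‖ ≤ C := by
      by_contra hcon
      push_neg at hcon
      have hfreq : ∀ k : ℕ, ∃ᶠ n in atTop, (k : ℝ) < ‖σ n‖ := by
        intro k
        rw [frequently_atTop]
        intro N
        by_contra hN
        push_neg at hN
        set C : ℝ := (k : ℝ) ⊔ (Finset.range (N + 1)).sup' (by simp) (fun n => ‖σ n‖) with hC
        obtain ⟨m, hm⟩ := hcon C
        rcases le_or_gt N m with h | h
        · exact absurd (hN m h) (not_le.mpr (lt_of_le_of_lt le_sup_left hm))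
        · exact absurd ((Finset.le_sup' (fun n => ‖σ n‖)
            (Finset.mem_range.mpr (by omega))).trans le_sup_right) (not_le.mpr hm)
      obtain ⟨φ, hφmono, hφ⟩ := extraction_forall_of_frequently hfreq
      have hpos : ∀ k, (0 : ℝ) < ‖σ (φ k)‖ := fun k =>
        lt_of_le_of_lt (by positivity) (hφ k)
      have htop : Tendsto (fun k => ‖σ (φ k)‖) atTop atTop :=
        tendsto_atTop_mono (fun k => (hφ k).le) tendsto_natCast_atTop_atTop
      set u : ℕ → F := fun k => ‖σ (φ k)‖⁻¹ • σ (φ k) with hu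
      have humem : ∀ k, u k ∈ sphere (0 : F) 1 := by
        intro k
        simp [hu, norm_smul, abs_of_pos (inv_pos.mpr (hpos k)),
          inv_mul_cancel₀ (hpos k).ne']
      obtain ⟨ξ, hξ, ψ, hψmono, hψ⟩ := (isCompact_sphere (0 : F) 1).tendsto_subseq humem
      -- (q.1, ξ) ∈ A
      have hmemA : ∀ k, ((x (φ (ψ k))).1, u (ψ k)) ∈ A := fun k =>
        hAconic _ _ (hσ (φ (ψ k))) _ (inv_pos.mpr (hpos (ψ k)))
      have hxA : (q.1, ξ) ∈ A := by
        refine hA.mem_of_tendsto (Tendsto.prodMk_nhds ?_ hψ) (Eventually.of_forall hmemA)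
        exact hq1.comp ((hφmono.comp hψmono).tendsto_atTop)
      -- (q.1, -ξ) ∈ B
      have hmemB : ∀ k, ((x (φ (ψ k))).1, ‖σ (φ (ψ k))‖⁻¹ • τ (φ (ψ k))) ∈ B := fun k =>
        hBconic _ _ (hτ (φ (ψ k))) _ (inv_pos.mpr (hpos (ψ k)))
      have hxB : (q.1, -ξ) ∈ B := by
        have hsmall : Tendsto (fun k => ‖σ (φ (ψ k))‖⁻¹ •
            (σ (φ (ψ k)) + τ (φ (ψ k)))) atTop (𝓝 ((0 : ℝ) • q.2)) := by
          exact Tendsto.smul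
            ((tendsto_inv_atTop_zero).comp (htop.comp hψmono.tendsto_atTop))
            (hq2.comp ((hφmono.comp hψmono).tendsto_atTop))
        have hτlim : Tendsto (fun k => ‖σ (φ (ψ k))‖⁻¹ • τ (φ (ψ k))) atTop (𝓝 (-ξ)) := by
          have heq : ∀ k, ‖σ (φ (ψ k))‖⁻¹ • τ (φ (ψ k)) =
              ‖σ (φ (ψ k))‖⁻¹ • (σ (φ (ψ k)) + τ (φ (ψ k))) - u (ψ k) := by
            intro k; simp [hu, smul_add]
          simp only [funext heq]
          simpa using hsmall.sub hψ
        refine hB.mem_of_tendsto (Tendsto.prodMk_nhds ?_ hτlim) (Eventually.of_forall hmemB)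
        exact hq1.comp ((hφmono.comp hψmono).tendsto_atTop)
      have : ξ = 0 := hanti ⟨hxA, by simpa using hxB⟩
      rw [this] at hξ
      simp at hξ
    -- Step 2: extract a convergent subsequence of (σ, τ).
    obtain ⟨C, hC⟩ := hbdd
    have hbdd2 : ∃ C2 : ℝ, ∀ n, ‖σ n + τ n‖ ≤ C2 := by
      obtain ⟨C2, hC2⟩ := (hq2.norm.bddAbove_range)
      exact ⟨C2, fun n => hC2 ⟨n, rfl⟩⟩
    obtain ⟨C2, hC2⟩ := hbdd2
    have hτbdd : ∀ n, ‖τ n‖ ≤ C2 + C := by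
      intro n
      calc ‖τ n‖ = ‖(σ n + τ n) - σ n‖ := by rw [add_sub_cancel_left]
        _ ≤ ‖σ n + τ n‖ + ‖σ n‖ := norm_sub_le _ _
        _ ≤ C2 + C := add_le_add (hC2 n) (hC n)
    have hcompact : IsCompact (closedBall (0 : F) C ×ˢ closedBall (0 : F) (C2 + C)) :=
      (isCompact_closedBall _ _).prod (isCompact_closedBall _ _)
    have hmem : ∀ n, (σ n, τ n) ∈ closedBall (0 : F) C ×ˢ closedBall (0 : F) (C2 + C) :=
      fun n => ⟨mem_closedBall_zero_iff.mpr (hC n), mem_closedBall_zero_iff.mpr (hτbdd n)⟩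
    obtain ⟨⟨ξ, ζ⟩, _, φ, hφmono, hφ⟩ := hcompact.tendsto_subseq hmem
    have hξlim : Tendsto (fun k => σ (φ k)) atTop (𝓝 ξ) :=
      (continuous_fst.tendsto _).comp hφ
    have hζlim : Tendsto (fun k => τ (φ k)) atTop (𝓝 ζ) :=
      (continuous_snd.tendsto _).comp hφ
    have hq1' : Tendsto (fun k => (x (φ k)).1) atTop (𝓝 q.1) :=
      hq1.comp hφmono.tendsto_atTop
    refine ⟨ξ, ζ, ?_, ?_, ?_⟩
    · exact hA.mem_of_tendsto (Tendsto.prodMk_nhds hq1' hξlim)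
        (Eventually.of_forall fun k => hσ (φ k))
    · exact hB.mem_of_tendsto (Tendsto.prodMk_nhds hq1' hζlim)
        (Eventually.of_forall fun k => hτ (φ k))
    · exact tendsto_nhds_unique (hq2.comp hφmono.tendsto_atTop) (hξlim.add hζlim)
  · rintro p η ⟨σ, τ, h1, h2, h3⟩ r hr
    exact ⟨r • σ, r • τ, hAconic _ _ h1 r hr, hBconic _ _ h2 r hr, by show r • (p, η).2 = _; rw [h3, smul_add]⟩
end

section
/- Let F be a finite-dimensional real normed vector space, and let C and D be closed subsets of F, each closed under multiplication by positive real scalars (i.e., r • c ∈ C for all c ∈ C and real r > 0, and similarly for D). If C ∩ (−D) ⊆ {0}, then the Minkowski sum C + D = {σ + τ : σ ∈ C, τ ∈ D} is closed in F. -/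
open Pointwise Filter Bornology Topology

/-- Blow-up lemma: if `c n ∈ C`, `d n ∈ D`, `c n + d n → x` while `‖c n‖ → ∞`,
then `C ∩ (-D)` contains a unit vector, contradicting `C ∩ (-D) ⊆ {0}`. -/
lemma no_blowup_aux
    {F : Type*} [NormedAddCommGroup F] [NormedSpace ℝ F] [FiniteDimensional ℝ F]
    (C D : Set F) (hC : IsClosed C) (hD : IsClosed D)
    (hCcone : ∀ c ∈ C, ∀ r : ℝ, 0 < r → r • c ∈ C)
    (hDcone : ∀ d ∈ D, ∀ r : ℝ, 0 < r → r • d ∈ D)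
    (hmeet : C ∩ (-D) ⊆ {0})
    (c d : ℕ → F) (hc : ∀ n, c n ∈ C) (hd : ∀ n, d n ∈ D) (x : F)
    (hsum : Tendsto (fun n => c n + d n) atTop (𝓝 x))
    (hnorm : Tendsto (fun n => ‖c n‖) atTop atTop) : False := by
  -- eventually ‖c n‖ > 0; pass to a tail
  obtain ⟨N, hN⟩ := (hnorm.eventually_gt_atTop 0).exists_forall_of_atTop
  set c' : ℕ → F := fun n => c (n + N) with hc'
  set d' : ℕ → F := fun n => d (n + N) with hd'
  have hpos : ∀ n, (0 : ℝ) < ‖c' n‖ := fun n => hN (n + N) (Nat.le_add_left _ _)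
  have hnorm' : Tendsto (fun n => ‖c' n‖) atTop atTop :=
    hnorm.comp (tendsto_add_atTop_nat N)
  have hsum' : Tendsto (fun n => c' n + d' n) atTop (𝓝 x) :=
    hsum.comp (tendsto_add_atTop_nat N)
  -- unit vectors
  set u : ℕ → F := fun n => (‖c' n‖)⁻¹ • c' n with hu
  have hu_mem : ∀ n, u n ∈ Metric.sphere (0 : F) 1 := by
    intro n
    simp only [u, Metric.mem_sphere, dist_zero_right, norm_smul, norm_inv, norm_norm]
    field_simp [(hpos n).ne']
  obtain ⟨a, -, φ, hφ, hconv⟩ :=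
    tendsto_subseq_of_bounded (Metric.isBounded_sphere (x := (0:F)) (r := 1))
      hu_mem
  have ha_sphere : a ∈ Metric.sphere (0 : F) 1 :=
    Metric.isClosed_sphere.mem_of_tendsto hconv (Eventually.of_forall fun n => hu_mem _)
  have ha_C : a ∈ C := by
    refine hC.mem_of_tendsto hconv (Eventually.of_forall fun n => ?_)
    exact hCcone _ (hc _) _ (inv_pos.mpr (hpos _))
  -- (‖c' n‖)⁻¹ • d' n → -a
  have hinv : Tendsto (fun n => (‖c' (φ n)‖)⁻¹) atTop (𝓝 0) :=
    (tendsto_inv_atTop_zero.comp hnorm').comp hφ.tendsto_atTop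
  have hsumφ : Tendsto (fun n => c' (φ n) + d' (φ n)) atTop (𝓝 x) :=
    hsum'.comp hφ.tendsto_atTop
  have hkey : Tendsto (fun n => (‖c' (φ n)‖)⁻¹ • d' (φ n)) atTop (𝓝 (-a)) := by
    have h1 : Tendsto (fun n => (‖c' (φ n)‖)⁻¹ • (c' (φ n) + d' (φ n))) atTop
        (𝓝 ((0 : ℝ) • x)) := hinv.smul hsumφ
    rw [zero_smul] at h1
    have h2 := h1.sub hconv
    rw [zero_sub] at h2
    refine h2.congr fun n => ?_
    simp only [Function.comp_apply, u, smul_add]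
    abel
  have ha_negD : -a ∈ D := by
    refine hD.mem_of_tendsto hkey (Eventually.of_forall fun n => ?_)
    exact hDcone _ (hd _) _ (inv_pos.mpr (hpos _))
  have : a = 0 := hmeet ⟨ha_C, by simpa using ha_negD⟩
  simp [this] at ha_sphere

/-- If `C` and `D` are closed cones in a finite-dimensional real normed vector
space with `C ∩ (−D) ⊆ {0}`, then the Minkowski sum `C + D` is closed. -/
theorem isClosed_add_of_closed_cones
    {F : Type*} [NormedAddCommGroup F] [NormedSpace ℝ F] [FiniteDimensional ℝ F]
    (C D : Set F) (hC : IsClosed C) (hD : IsClosed D)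
    (hCcone : ∀ c ∈ C, ∀ r : ℝ, 0 < r → r • c ∈ C)
    (hDcone : ∀ d ∈ D, ∀ r : ℝ, 0 < r → r • d ∈ D)
    (hmeet : C ∩ (-D) ⊆ {0}) :
    IsClosed (C + D) := by
  refine IsSeqClosed.isClosed ?_
  intro z x hz hx
  choose c hcC d hdD hcd using fun n => Set.mem_add.mp (hz n)
  have hsum : Tendsto (fun n => c n + d n) atTop (𝓝 x) := by
    simpa only [hcd] using hx
  -- ‖c n‖ is bounded
  by_cases hbdd : BddAbove (Set.range fun n => ‖c n‖)
  · obtain ⟨M, hM⟩ := hbdd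
    have hcbd : ∀ n, c n ∈ Metric.closedBall (0 : F) M := by
      intro n
      simp only [Metric.mem_closedBall, dist_zero_right]
      exact hM ⟨n, rfl⟩
    obtain ⟨a, -, φ, hφ, hconv⟩ :=
      tendsto_subseq_of_bounded Metric.isBounded_closedBall hcbd
    have ha_C : a ∈ C := hC.mem_of_tendsto hconv (Eventually.of_forall fun n => hcC _)
    have hdconv : Tendsto (fun n => d (φ n)) atTop (𝓝 (x - a)) := by
      have := (hsum.comp hφ.tendsto_atTop).sub hconv
      refine this.congr fun n => ?_
      simp [Function.comp]
    have hb_D : x - a ∈ D := hD.mem_of_tendsto hdconv (Eventually.of_forall fun n => hdD _)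
    exact ⟨a, ha_C, x - a, hb_D, add_sub_cancel a x⟩
  · exfalso
    -- extract subsequence with ‖c (ψ n)‖ → ∞
    have hfreq : ∀ m : ℕ, ∃ᶠ k in atTop, (m : ℝ) < ‖c k‖ := by
      intro m
      rw [frequently_atTop]
      intro N
      by_contra h
      push_neg at h
      apply hbdd
      refine ⟨max m (Finset.sup' (Finset.range (N + 1)) ⟨0, by simp⟩ fun i => ‖c i‖), ?_⟩
      rintro y ⟨n, rfl⟩
      rcases le_or_gt N n with hn | hn
      · exact le_trans (h n hn) (le_max_left _ _)
      · refine le_trans ?_ (le_max_right _ _)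
        exact Finset.le_sup' (fun i => ‖c i‖) (Finset.mem_range.mpr (Nat.lt_succ_of_lt hn))
    obtain ⟨ψ, hψ, hψ'⟩ := Filter.extraction_forall_of_frequently hfreq
    have htend : Tendsto (fun n => ‖c (ψ n)‖) atTop atTop :=
      tendsto_atTop_mono (fun n => (hψ' n).le) tendsto_natCast_atTop_atTop
    exact no_blowup_aux C D hC hD hCcone hDcone hmeet (c ∘ ψ) (d ∘ ψ)
      (fun n => hcC _) (fun n => hdD _) x (hsum.comp hψ.tendsto_atTop) htend
end
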